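/- arXiv:1609.08090 — 2 statements merged into one kernel-verified Lean document; each statement's English description precedes it below -/
import Mathlib

section
/- For any two-input two-output nonsignaling box P and any two distinct indices j ≠ k in {0,1,2,3}, the monoandry relation B_j(P) + B_k(P) ≤ 4 holds, where B_j denotes the absolute value of the j-th CHSH expression. -/
open Finset Real

noncomputable section

/-- A two-input two-output box: `P a b x y` is the probability of outputs `a, b`
given inputs `x, y`. -/
abbrev Box := Fin 2 → Fin 2 → Fin 2 → Fin 2 → ℝ

/-- The correlator `⟨A_x B_y⟩`. -/
def corr (P : Box) (x y : Fin 2) : ℝ :=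
  ∑ a : Fin 2, ∑ b : Fin 2, (-1 : ℝ) ^ ((a : ℕ) + (b : ℕ)) * P a b x y

/-- Alice's marginal expectation `⟨A_x⟩` (computed with Bob's input `y`). -/
def margA (P : Box) (x y : Fin 2) : ℝ :=
  ∑ a : Fin 2, ∑ b : Fin 2, (-1 : ℝ) ^ ((a : ℕ)) * P a b x y

/-- Bob's marginal expectation `⟨B_y⟩` (computed with Alice's input `x`). -/
def margB (P : Box) (x y : Fin 2) : ℝ :=
  ∑ a : Fin 2, ∑ b : Fin 2, (-1 : ℝ) ^ ((b : ℕ)) * P a b x y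

/-- The absolute CHSH expression `B_{2α+β}`. -/
def bell (P : Box) (α β : Fin 2) : ℝ :=
  |corr P 0 0 + (-1 : ℝ) ^ (β : ℕ) * corr P 0 1 + (-1 : ℝ) ^ (α : ℕ) * corr P 1 0
    + (-1 : ℝ) ^ ((α : ℕ) + (β : ℕ) + 1) * corr P 1 1|

/-- Bell strength `Γ`. -/
def gammaStrength (P : Box) : ℝ :=
  min (|(|bell P 0 0 - bell P 0 1|) - (|bell P 1 0 - bell P 1 1|)|)
    (min (|(|bell P 0 0 - bell P 1 0|) - (|bell P 0 1 - bell P 1 1|)|)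
      (|(|bell P 0 0 - bell P 1 1|) - (|bell P 0 1 - bell P 1 0|)|))

/-- Valid box: nonnegative and normalized. -/
def IsBox (P : Box) : Prop :=
  (∀ a b x y, 0 ≤ P a b x y) ∧ ∀ x y, ∑ a : Fin 2, ∑ b : Fin 2, P a b x y = 1

/-- Nonsignaling condition. -/
def NonSignaling (P : Box) : Prop :=
  (∀ a x y y', ∑ b : Fin 2, P a b x y = ∑ b : Fin 2, P a b x y') ∧
  (∀ b x x' y, ∑ a : Fin 2, P a b x y = ∑ a : Fin 2, P a b x' y)

/-- The noisy PR box `p·P_PR + (1-p)·P_N`. -/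
def noisyPR (p : ℝ) : Box := fun a b x y =>
  (1 + (-1 : ℝ) ^ ((a : ℕ) + (b : ℕ) + (x : ℕ) * (y : ℕ)) * p) / 4

/-- The PR box `P_PR^{αβγ}` (addition/multiplication in `Fin 2` is mod 2). -/
def PRbox (α β γ : Fin 2) : Box := fun a b x y =>
  if a + b = x * y + α * x + β * y + γ then 1 / 2 else 0

/-- The local deterministic box `P_D^{αβγε}`. -/
def detBox (α β γ ε : Fin 2) : Box := fun a b x y =>
  if a = α * x + β ∧ b = γ * y + ε then 1 else 0

lemma abs_corr_le_one {P : Box} (hbox : IsBox P) (x y : Fin 2) : |corr P x y| ≤ 1 := by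
  calc |corr P x y|
      ≤ ∑ a : Fin 2, ∑ b : Fin 2, |(-1 : ℝ) ^ ((a : ℕ) + (b : ℕ)) * P a b x y| :=
        (abs_sum_le_sum_abs _ _).trans (sum_le_sum fun a _ => abs_sum_le_sum_abs _ _)
    _ = ∑ a : Fin 2, ∑ b : Fin 2, P a b x y := by
        simp only [abs_mul, abs_neg_one_pow, one_mul, abs_of_nonneg (hbox.1 _ _ x y)]
    _ = 1 := hbox.2 x y

lemma abs_add_abs_le_of_abs_add_le_of_abs_sub_le {u v c : ℝ} (hadd : |u + v| ≤ c)
    (hsub : |u - v| ≤ c) : |u| + |v| ≤ c := by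
  rw [abs_le] at hadd hsub
  cases abs_cases u <;> cases abs_cases v <;> linarith

/-- Two distinct CHSH sign patterns agree in exactly two of the four correlators, so the sum
and the difference of the two CHSH expressions each involve only two correlators, with
coefficients `±2`. -/
theorem bell_add_bell_le_four_of_abs_corr_le_one {P : Box} (hP : ∀ x y, |corr P x y| ≤ 1)
    {α β α' β' : Fin 2} (hne : (α, β) ≠ (α', β')) : bell P α β + bell P α' β' ≤ 4 := by
  have h00 := abs_le.mp (hP 0 0)
  have h01 := abs_le.mp (hP 0 1)
  have h10 := abs_le.mp (hP 1 0)
  have h11 := abs_le.mp (hP 1 1)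
  unfold bell
  apply abs_add_abs_le_of_abs_add_le_of_abs_sub_le <;> rw [abs_le] <;>
    fin_cases α <;> fin_cases β <;> fin_cases α' <;> fin_cases β' <;>
    simp_all <;> constructor <;> linarith

theorem monoandry_general (P : Box) (hbox : IsBox P)
    (α β α' β' : Fin 2) (hne : (α, β) ≠ (α', β')) :
    bell P α β + bell P α' β' ≤ 4 :=
  bell_add_bell_le_four_of_abs_corr_le_one (abs_corr_le_one hbox) hne

/-- monoandry, `B_j(P) + B_k(P) ≤ 4` for distinct CHSH expressions of
any two-input two-output nonsignaling box. -/
theorem monoandry (P : Box) (hbox : IsBox P) (hns : NonSignaling P)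
    (α β α' β' : Fin 2) (hne : (α, β) ≠ (α', β')) :
    bell P α β + bell P α' β' ≤ 4 :=
  monoandry_general P hbox α β α' β' hne
end
end

section
/- For p ∈ [0, 1/2], the noisy PR box with parameter p admits a local hidden variable decomposition with a four-valued hidden variable: P(ab|xy) = (1/4) Σ_{λ=1}^{4} P_λ(a|x) Q_λ(b|y), where the Q_λ are the four deterministic Bob strategies b = 0, b = y, b = y⊕1, b = 1 respectively, and the P_λ are specific valid (nonnegative, normalized) nondeterministic Alice strategies depending on p. -/
open Finset Real

noncomputable section

/-- Single-party deterministic response `P_D^{αβ}(a|x)`. -/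
def det1 (α β a x : Fin 2) : ℝ := if a = α * x + β then 1 else 0

/-- Alice's four nondeterministic strategies. -/
def aliceStrat (p : ℝ) (l : Fin 4) (a x : Fin 2) : ℝ :=
  if l = 0 then (det1 0 0 a x + 2 * p * det1 1 0 a x + (1 - 2 * p) * det1 0 1 a x) / 2
  else if l = 1 then (det1 0 0 a x + 2 * p * det1 1 1 a x + (1 - 2 * p) * det1 0 1 a x) / 2
  else if l = 2 then (det1 0 1 a x + 2 * p * det1 1 1 a x + (1 - 2 * p) * det1 0 0 a x) / 2
  else (det1 0 1 a x + 2 * p * det1 1 0 a x + (1 - 2 * p) * det1 0 0 a x) / 2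

/-- Bob's four deterministic strategies. -/
def bobStrat (l : Fin 4) (b y : Fin 2) : ℝ :=
  if l = 0 then det1 0 0 b y
  else if l = 1 then det1 1 0 b y
  else if l = 2 then det1 0 1 b y
  else det1 1 1 b y

/-!
Under hidden value `λ`, Alice outputs a coin with bias `2p · c_λ(x)`, where `c_λ(x) ∈ {0, ±1}`
(`aliceBias`): fair on one input, biased by `±2p` on the other. Averaging the fair parts against
Bob's deterministic responses gives `1/4`, because Bob's strategies come in complementary pairs
`b = βy` and `b = βy ⊕ 1`. The biased parts add up to `Q₁ - Q₃ = (-1)^b` for `x = 0` and to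
`Q₂ - Q₄ = (-1)^(b ⊕ y)` for `x = 1`, i.e. to `(-1)^(b ⊕ xy)`, which is the correlation of the
noisy PR box.
-/

lemma det1_nonneg (α β a x : Fin 2) : 0 ≤ det1 α β a x := by
  unfold det1; split_ifs <;> norm_num

lemma sum_det1 (α β x : Fin 2) : ∑ a : Fin 2, det1 α β a x = 1 := by
  simp [det1]

lemma det1_sub_det1_flip (α b y : Fin 2) :
    det1 α 0 b y - det1 α 1 b y = (-1 : ℝ) ^ ((b : ℕ) + (α : ℕ) * (y : ℕ)) := by
  fin_cases α <;> fin_cases b <;> fin_cases y <;> norm_num +decide [det1]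

lemma det1_add_det1_flip (α b y : Fin 2) : det1 α 0 b y + det1 α 1 b y = 1 := by
  fin_cases α <;> fin_cases b <;> fin_cases y <;> norm_num +decide [det1]

lemma biasedBit_nonneg {t : ℝ} (ht : |t| ≤ 1) (a : Fin 2) :
    0 ≤ (1 + (-1 : ℝ) ^ (a : ℕ) * t) / 2 := by
  have : |(-1 : ℝ) ^ (a : ℕ) * t| ≤ 1 := by simpa [abs_mul] using ht
  linarith [neg_abs_le ((-1 : ℝ) ^ (a : ℕ) * t)]

lemma sum_biasedBit (t : ℝ) : ∑ a : Fin 2, (1 + (-1 : ℝ) ^ (a : ℕ) * t) / 2 = 1 := by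
  simp only [Fin.sum_univ_two, Fin.val_zero, Fin.val_one]; ring

lemma bobStrat_eq_det1 (l : Fin 4) : bobStrat l = det1 (![0, 1, 0, 1] l) (![0, 0, 1, 1] l) := by
  fin_cases l <;> rfl

def aliceBias (l : Fin 4) (x : Fin 2) : ℝ := ![![1, 0], ![0, 1], ![-1, 0], ![0, -1]] l x

lemma abs_aliceBias_le_one (l : Fin 4) (x : Fin 2) : |aliceBias l x| ≤ 1 := by
  fin_cases l <;> fin_cases x <;> norm_num [aliceBias]

lemma aliceStrat_eq (p : ℝ) (l : Fin 4) (a x : Fin 2) :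
    aliceStrat p l a x = (1 + (-1 : ℝ) ^ (a : ℕ) * (2 * p * aliceBias l x)) / 2 := by
  fin_cases l <;> fin_cases a <;> fin_cases x <;> simp [aliceStrat, aliceBias, det1] <;> ring

lemma sum_bobStrat (b y : Fin 2) : ∑ l : Fin 4, bobStrat l b y = 2 := by
  have h₀ := det1_add_det1_flip 0 b y
  have h₁ := det1_add_det1_flip 1 b y
  simp only [Fin.sum_univ_four, bobStrat, Fin.isValue, Fin.reduceEq, ↓reduceIte]
  linarith

lemma sum_aliceBias_mul_bobStrat (b x y : Fin 2) :
    ∑ l : Fin 4, aliceBias l x * bobStrat l b y = (-1 : ℝ) ^ ((b : ℕ) + (x : ℕ) * (y : ℕ)) := by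
  rw [← det1_sub_det1_flip]
  fin_cases x <;> simp [Fin.sum_univ_four, aliceBias, bobStrat, sub_eq_add_neg]

/-- for `p ∈ [0, 1/2]`, the noisy PR box admits a four-valued
local hidden variable decomposition with valid Alice strategies. -/
theorem noisyPR_four_dim_LHV (p : ℝ) (hp0 : 0 ≤ p) (hp1 : p ≤ 1 / 2) :
    (∀ l a x, 0 ≤ aliceStrat p l a x) ∧
    (∀ l x, ∑ a : Fin 2, aliceStrat p l a x = 1) ∧
    (∀ l b y, 0 ≤ bobStrat l b y) ∧
    (∀ l y, ∑ b : Fin 2, bobStrat l b y = 1) ∧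
    (∀ a b x y, noisyPR p a b x y
      = (1 / 4) * ∑ l : Fin 4, aliceStrat p l a x * bobStrat l b y) := by
  have hbias (l : Fin 4) (x : Fin 2) : |2 * p * aliceBias l x| ≤ 1 := by
    rw [abs_mul, abs_of_nonneg (by positivity : (0 : ℝ) ≤ 2 * p)]
    nlinarith [abs_aliceBias_le_one l x, abs_nonneg (aliceBias l x)]
  refine ⟨fun l a x => ?_, fun l x => ?_, fun l b y => ?_, fun l y => ?_, fun a b x y => ?_⟩
  · exact aliceStrat_eq p l a x ▸ biasedBit_nonneg (hbias l x) a
  · simp only [aliceStrat_eq, sum_biasedBit]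
  · exact bobStrat_eq_det1 l ▸ det1_nonneg _ _ b y
  · exact bobStrat_eq_det1 l ▸ sum_det1 _ _ y
  · have hsplit : ∑ l : Fin 4, aliceStrat p l a x * bobStrat l b y
        = (∑ l : Fin 4, bobStrat l b y
          + (-1 : ℝ) ^ (a : ℕ) * (2 * p) * ∑ l : Fin 4, aliceBias l x * bobStrat l b y) / 2 := by
      simp only [aliceStrat_eq, mul_sum, ← sum_add_distrib, sum_div]
      exact sum_congr rfl fun l _ => by ring
    rw [hsplit, sum_bobStrat, sum_aliceBias_mul_bobStrat, noisyPR]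
    simp only [pow_add]
    ring
end
end
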